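/- arXiv:2511.16171 — 3 statements merged into one kernel-verified Lean document; each statement's English description precedes it below -/
import Mathlib

section
/- Let Ω ⊂ ℝ^d be a nonempty bounded open set and let K denote its closure. For every integer n ≥ 1 and every r > 0, the set X_{n,r} of two-layer ReLU networks of width n with parameters in M_r, regarded as a subset of the space C(K, ℝ) of continuous real-valued functions on K equipped with the supremum norm, is a compact (equivalently, sequentially compact) subset of C(K, ℝ); moreover every uniform limit of a sequence in X_{n,r} again belongs to X_{n,r}. -/
/-! The parameter set `M_r^n` is compact (closed, and contained in a product of intervals since
`‖b‖₁ + |c| = 1` forces `|b_i|, |c| ≤ 1`), and the network depends jointly continuously on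
parameters and input, so `θ ↦ f_θ|_K` is continuous into `C(K, ℝ)`. Hence `X_{n,r}` is a
continuous image of a compact set, so compact, hence closed in the Hausdorff space `C(K, ℝ)`. -/

open MeasureTheory Filter Topology Bornology

noncomputable section

/-- Parameter of a single neuron: `(a, b, c)`. -/
abbrev NNParam (d : ℕ) : Type := ℝ × (Fin d → ℝ) × ℝ

/-- ℓ¹ norm on `ℝ^d`. -/
def l1 {d : ℕ} (b : Fin d → ℝ) : ℝ := ∑ i, |b i|

/-- The two-layer ReLU network with parameters `θ`. -/
def netFun {d n : ℕ} (θ : Fin n → NNParam d) : (Fin d → ℝ) → ℝ :=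
  fun x => (1 / (n : ℝ)) * ∑ j, (θ j).1 * max (∑ i, (θ j).2.1 i * x i + (θ j).2.2) 0

theorem netFun_continuous {d n : ℕ} (θ : Fin n → NNParam d) : Continuous (netFun θ) := by
  unfold netFun
  refine continuous_const.mul (continuous_finset_sum _ fun j _ => continuous_const.mul ?_)
  exact ((continuous_finset_sum _ fun i _ =>
    (continuous_const.mul (continuous_apply i))).add continuous_const).max continuous_const

/-- Membership of a single-neuron parameter in the set `M_r`. -/
def memMr {d : ℕ} (r : ℝ) (p : NNParam d) : Prop :=
  |p.1| ≤ r ∧ l1 p.2.1 + |p.2.2| = 1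

/-- The two-layer ReLU network restricted to `K`, as a continuous map on `K`. -/
def netCM {d n : ℕ} (K : Set (Fin d → ℝ)) (θ : Fin n → NNParam d) : C(K, ℝ) :=
  ⟨fun x => netFun θ x.1, (netFun_continuous θ).comp continuous_subtype_val⟩

/-- The class `X_{n,r}` of width-`n` networks with parameters in `M_r`, viewed inside `C(K, ℝ)`. -/
def XC {d : ℕ} (K : Set (Fin d → ℝ)) (n : ℕ) (r : ℝ) : Set C(K, ℝ) :=
  {f | ∃ θ : Fin n → NNParam d, (∀ j, memMr r (θ j)) ∧ f = netCM K θ}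

section Parameters

variable {d : ℕ}

lemma l1_nonneg (b : Fin d → ℝ) : 0 ≤ l1 b :=
  Finset.sum_nonneg fun i _ => abs_nonneg (b i)

lemma abs_le_l1 (b : Fin d → ℝ) (i : Fin d) : |b i| ≤ l1 b :=
  Finset.single_le_sum (f := fun j => |b j|) (fun j _ => abs_nonneg (b j)) (Finset.mem_univ i)

lemma continuous_l1 : Continuous (l1 : (Fin d → ℝ) → ℝ) := by
  unfold l1
  fun_prop

lemma isClosed_setOf_memMr (r : ℝ) : IsClosed {p : NNParam d | memMr r p} :=
  (isClosed_le continuous_fst.abs continuous_const).inter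
    (isClosed_eq ((continuous_l1.comp (continuous_fst.comp continuous_snd)).add
      (continuous_snd.comp continuous_snd).abs) continuous_const)

lemma setOf_memMr_subset (r : ℝ) :
    {p : NNParam d | memMr r p} ⊆
      Set.Icc (-r) r ×ˢ (Set.univ.pi fun _ => Set.Icc (-1) 1) ×ˢ Set.Icc (-1) 1 := by
  rintro ⟨a, b, c⟩ ⟨ha, hbc⟩
  have hc : |c| ≤ 1 := by linarith [l1_nonneg b]
  refine ⟨abs_le.mp ha, fun i _ => abs_le.mp ?_, abs_le.mp hc⟩
  linarith [abs_le_l1 b i, abs_nonneg c]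

lemma isCompact_setOf_memMr (r : ℝ) : IsCompact {p : NNParam d | memMr r p} :=
  (isCompact_Icc.prod ((isCompact_univ_pi fun _ => isCompact_Icc).prod isCompact_Icc))
    |>.of_isClosed_subset (isClosed_setOf_memMr r) (setOf_memMr_subset r)

end Parameters

lemma continuous_netFun_uncurry {d n : ℕ} :
    Continuous fun p : (Fin n → NNParam d) × (Fin d → ℝ) => netFun p.1 p.2 := by
  unfold netFun
  fun_prop

lemma continuous_netCM {d n : ℕ} (K : Set (Fin d → ℝ)) :
    Continuous fun θ : Fin n → NNParam d => netCM K θ :=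
  ContinuousMap.continuous_of_continuous_uncurry _ <|
    continuous_netFun_uncurry.comp
      (continuous_fst.prodMk (continuous_subtype_val.comp continuous_snd))

lemma XC_eq_image {d : ℕ} (K : Set (Fin d → ℝ)) (n : ℕ) (r : ℝ) :
    XC K n r = netCM K '' {θ : Fin n → NNParam d | ∀ j, memMr r (θ j)} := by
  ext f
  simp only [XC, Set.mem_image, Set.mem_ofPred_eq, eq_comm]

lemma isCompact_XC {d : ℕ} (K : Set (Fin d → ℝ)) (n : ℕ) (r : ℝ) :
    IsCompact (XC K n r) := by
  rw [XC_eq_image]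
  exact (isCompact_pi_infinite fun _ => isCompact_setOf_memMr r).image (continuous_netCM K)

theorem twoLayer_class_isCompact_in_CK_general
    {d : ℕ} (Ω : Set (Fin d → ℝ)) (n : ℕ) (r : ℝ) :
    IsCompact (XC (closure Ω) n r) ∧
      ∀ (F : ℕ → C(closure Ω, ℝ)) (f : C(closure Ω, ℝ)),
        (∀ k, F k ∈ XC (closure Ω) n r) → Tendsto F atTop (nhds f) →
          f ∈ XC (closure Ω) n r :=
  ⟨isCompact_XC _ n r, fun _ _ hF hlim =>
    (isCompact_XC _ n r).isClosed.mem_of_tendsto hlim (Eventually.of_forall hF)⟩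

/-- For a nonempty bounded open `Ω ⊆ ℝ^d` with closure `K`, and any `n ≥ 1`,
`r > 0`, the set `X_{n,r}` is a compact subset of `C(K, ℝ)` (with the uniform topology,
which on the compact set `K` is the compact-open topology), and every uniform limit of a
sequence in `X_{n,r}` again belongs to `X_{n,r}`. -/
theorem twoLayer_class_isCompact_in_CK
    {d : ℕ} (hd : 1 ≤ d) (Ω : Set (Fin d → ℝ)) (hne : Ω.Nonempty) (hΩo : IsOpen Ω)
    (hΩb : IsBounded Ω) (n : ℕ) (hn : 1 ≤ n) (r : ℝ) (hr : 0 < r) :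
    IsCompact (XC (closure Ω) n r) ∧
      ∀ (F : ℕ → C(closure Ω, ℝ)) (f : C(closure Ω, ℝ)),
        (∀ k, F k ∈ XC (closure Ω) n r) → Tendsto F atTop (nhds f) →
          f ∈ XC (closure Ω) n r :=
  twoLayer_class_isCompact_in_CK_general Ω n r

end
end

section
/- Let d ≥ 1, n ≥ 1, R > 0 and set C_R := max(R, 1). Let θ = ((a_j, b_j, c_j))_{j=1}^n ∈ (ℝ × ℝ^d × ℝ)^n satisfy ‖b_j‖₁ + |c_j| = 1 for all j, and let θ' = ((a'_j, b'_j, c'_j))_{j=1}^n ∈ (ℝ × ℝ^d × ℝ)^n be arbitrary. Then for every x ∈ ℝ^d with ‖x‖_∞ ≤ R, the two-layer ReLU networks satisfy |f_θ(x) − f_{θ'}(x)| ≤ C_R · [ (1/n) ∑_{j=1}^n |a_j − a'_j| + (1/n) ∑_{j=1}^n |a'_j| · ( ‖b_j − b'_j‖₁ + |c_j − c'_j| ) ]. -/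
open MeasureTheory Filter Topology Bornology

noncomputable section

/-! The proof is neuron by neuron: writing `σ(t) = max t 0`,
`a σ(u) - a' σ(u') = (a - a') σ(u) + a' (σ(u) - σ(u'))`, and `σ` is 1-Lipschitz with `|σ(u)| ≤ |u|`.
On the box `‖x‖_∞ ≤ R`, Hölder's inequality and `R, 1 ≤ C_R` bound the affine map `x ↦ b · x + c`
by `C_R (‖b‖₁ + |c|)`. For the normalized `θ_j` this gives `|σ(u)| ≤ C_R`, and applied to the
difference `θ_j - θ'_j` (the pre-activation is linear in the parameters) it bounds `|u - u'|`. -/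

theorem abs_sum_mul_le_l1 {d : ℕ} {C : ℝ} (b x : Fin d → ℝ) (hx : ∀ i, |x i| ≤ C) :
    |∑ i, b i * x i| ≤ C * l1 b :=
  calc |∑ i, b i * x i| ≤ ∑ i, |b i| * |x i| := by
        simpa only [abs_mul] using Finset.abs_sum_le_sum_abs (fun i => b i * x i) Finset.univ
    _ ≤ ∑ i, |b i| * C := by gcongr with i; exact hx i
    _ = C * l1 b := by rw [← Finset.sum_mul, l1, mul_comm]

namespace NNParam

variable {d : ℕ}

def preact (p : NNParam d) (x : Fin d → ℝ) : ℝ := ∑ i, p.2.1 i * x i + p.2.2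

def neuron (p : NNParam d) (x : Fin d → ℝ) : ℝ := p.1 * max (p.preact x) 0

theorem preact_sub (p p' : NNParam d) (x : Fin d → ℝ) :
    (p - p').preact x = p.preact x - p'.preact x := by
  simp only [preact, Prod.snd_sub, Prod.fst_sub, Pi.sub_apply, sub_mul, Finset.sum_sub_distrib]
  ring

theorem abs_preact_le {C : ℝ} (hC : 1 ≤ C) (p : NNParam d) {x : Fin d → ℝ}
    (hx : ∀ i, |x i| ≤ C) : |p.preact x| ≤ C * (l1 p.2.1 + |p.2.2|) :=
  calc |p.preact x| ≤ |∑ i, p.2.1 i * x i| + |p.2.2| := abs_add_le _ _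
    _ ≤ C * l1 p.2.1 + C * |p.2.2| := by
        gcongr
        · exact abs_sum_mul_le_l1 _ _ hx
        · exact le_mul_of_one_le_left (abs_nonneg _) hC
    _ = C * (l1 p.2.1 + |p.2.2|) := by ring

theorem abs_neuron_sub_le {C : ℝ} (hC : 1 ≤ C) {p : NNParam d} (hp : l1 p.2.1 + |p.2.2| = 1)
    (p' : NNParam d) {x : Fin d → ℝ} (hx : ∀ i, |x i| ≤ C) :
    |p.neuron x - p'.neuron x| ≤
      C * (|p.1 - p'.1| + |p'.1| * (l1 (p - p').2.1 + |(p - p').2.2|)) := by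
  have hrelu : |max (p.preact x) 0| ≤ C := by
    rw [abs_of_nonneg (le_max_right _ _)]
    calc max (p.preact x) 0 ≤ |p.preact x| := max_le (le_abs_self _) (abs_nonneg _)
      _ ≤ C := by simpa only [hp, mul_one] using abs_preact_le hC p hx
  have hrelu_sub : |max (p.preact x) 0 - max (p'.preact x) 0| ≤
      C * (l1 (p - p').2.1 + |(p - p').2.2|) := by
    refine (abs_max_sub_max_le_abs _ _ _).trans ?_
    rw [← preact_sub]
    exact abs_preact_le hC _ hx
  calc |p.neuron x - p'.neuron x|
      = |(p.1 - p'.1) * max (p.preact x) 0 +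
          p'.1 * (max (p.preact x) 0 - max (p'.preact x) 0)| := by
        rw [neuron, neuron]; congr 1; ring
    _ ≤ |p.1 - p'.1| * C + |p'.1| * (C * (l1 (p - p').2.1 + |(p - p').2.2|)) := by
        refine (abs_add_le _ _).trans ?_
        rw [abs_mul, abs_mul]
        gcongr
    _ = C * (|p.1 - p'.1| + |p'.1| * (l1 (p - p').2.1 + |(p - p').2.2|)) := by ring

end NNParam

theorem netFun_param_stability_general
    {d n : ℕ} (R : ℝ)
    (θ θ' : Fin n → NNParam d)
    (hθ : ∀ j, l1 (θ j).2.1 + |(θ j).2.2| = 1)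
    (x : Fin d → ℝ) (hx : ∀ i, |x i| ≤ R) :
    |netFun θ x - netFun θ' x| ≤
      max R 1 *
        ((1 / (n : ℝ)) * ∑ j, |(θ j).1 - (θ' j).1| +
          (1 / (n : ℝ)) * ∑ j, |(θ' j).1| *
            (l1 (fun i => (θ j).2.1 i - (θ' j).2.1 i) + |(θ j).2.2 - (θ' j).2.2|)) := by
  have hxC : ∀ i, |x i| ≤ max R 1 := fun i => (hx i).trans (le_max_left R 1)
  have hsplit : netFun θ x - netFun θ' x =
      (1 / (n : ℝ)) * ∑ j, ((θ j).neuron x - (θ' j).neuron x) := by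
    rw [Finset.sum_sub_distrib, mul_sub]; rfl
  calc |netFun θ x - netFun θ' x|
      ≤ (1 / (n : ℝ)) * ∑ j, |(θ j).neuron x - (θ' j).neuron x| := by
        rw [hsplit, abs_mul, abs_of_nonneg (by positivity)]
        gcongr
        exact Finset.abs_sum_le_sum_abs _ _
    _ ≤ (1 / (n : ℝ)) * ∑ j, max R 1 * (|(θ j).1 - (θ' j).1| +
          |(θ' j).1| * (l1 (fun i => (θ j).2.1 i - (θ' j).2.1 i) + |(θ j).2.2 - (θ' j).2.2|)) := by
        gcongr with j
        exact NNParam.abs_neuron_sub_le (le_max_right R 1) (hθ j) _ hxC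
    _ = _ := by
        rw [← Finset.mul_sum, Finset.sum_add_distrib]
        ring

/-- Pointwise stability of two-layer ReLU networks in the parameters:
if `‖b_j‖₁ + |c_j| = 1` for all `j` and `‖x‖_∞ ≤ R`, then with `C_R = max R 1`,
`|f_θ(x) − f_θ'(x)| ≤ C_R · [ (1/n) ∑_j |a_j − a'_j| + (1/n) ∑_j |a'_j| (‖b_j − b'_j‖₁ + |c_j − c'_j|) ]`. -/
theorem netFun_param_stability
    {d n : ℕ} (hd : 1 ≤ d) (hn : 1 ≤ n) (R : ℝ) (hR : 0 < R)
    (θ θ' : Fin n → NNParam d)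
    (hθ : ∀ j, l1 (θ j).2.1 + |(θ j).2.2| = 1)
    (x : Fin d → ℝ) (hx : ∀ i, |x i| ≤ R) :
    |netFun θ x - netFun θ' x| ≤
      max R 1 *
        ((1 / (n : ℝ)) * ∑ j, |(θ j).1 - (θ' j).1| +
          (1 / (n : ℝ)) * ∑ j, |(θ' j).1| *
            (l1 (fun i => (θ j).2.1 i - (θ' j).2.1 i) + |(θ j).2.2 - (θ' j).2.2|)) :=
  netFun_param_stability_general R θ θ' hθ x hx

end
end

section
/- Let Ω ⊂ ℝ^d be a nonempty bounded open set, Y a normed vector space, A : L²(Ω) → Y a map, f† ∈ L²(Ω), and g := A(f†). Assume A is locally Hölder continuous at f† of order θ ∈ (0, 1]: there exist L > 0 and γ > 0 such that ‖A(f) − A(f†)‖_Y ≤ L·‖f − f†‖_{L²(Ω)}^θ whenever ‖f − f†‖_{L²(Ω)} < γ. Let r : ℕ → (0, ∞) and assume the approximation property: there exists C₀ > 0 such that for every n ≥ 1 there is f_n ∈ X_{n, r(n)} with ‖f_n − f†‖_{L²(Ω)} ≤ C₀/√n. Fix τ > 1. Then there exists a constant C > 0 such that for every δ ∈ (0, 1],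 every g^δ ∈ Y with ‖g^δ − g‖_Y ≤ δ, and every integer n ≥ C·δ^{−2/θ}, one has inf_{f ∈ X_{n, r(n)}} ‖A(f) − g^δ‖_Y ≤ τ·δ. Consequently, the smallest network width n(δ) at which the discrepancy principle inf_{f ∈ X_{n, r(n)}} ‖A(f) − g^δ‖_Y ≤ τδ is satisfied obeys n(δ) = O(δ^{−2/θ}) as δ → 0. -/
open MeasureTheory Filter Topology Bornology

noncomputable section

theorem memLp_net {d n : ℕ} {Ω : Set (Fin d → ℝ)} (hΩo : IsOpen Ω) (hΩb : IsBounded Ω)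
    (θ : Fin n → NNParam d) : MemLp (netFun θ) 2 (volume.restrict Ω) := by
  have hc := netFun_continuous θ
  obtain ⟨C, hC⟩ := hΩb.isCompact_closure.exists_bound_of_continuousOn hc.continuousOn
  haveI : Fact (volume Ω < ⊤) := ⟨hΩb.measure_lt_top⟩
  refine MemLp.of_bound (hc.aestronglyMeasurable.restrict) C ?_
  filter_upwards [ae_restrict_mem hΩo.measurableSet] with x hx
  exact hC x (subset_closure hx)

/-- The two-layer ReLU network with parameters `θ`, as an element of `L²(Ω)`. -/
def netLp {d n : ℕ} (Ω : Set (Fin d → ℝ)) (hΩo : IsOpen Ω) (hΩb : IsBounded Ω)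
    (θ : Fin n → NNParam d) : Lp ℝ 2 (volume.restrict Ω) :=
  (memLp_net hΩo hΩb θ).toLp (netFun θ)

/-- The class `X_{n,r}` of width-`n` networks with parameters in `M_r`, inside `L²(Ω)`. -/
def Xlp {d : ℕ} (Ω : Set (Fin d → ℝ)) (hΩo : IsOpen Ω) (hΩb : IsBounded Ω)
    (n : ℕ) (r : ℝ) : Set (Lp ℝ 2 (volume.restrict Ω)) :=
  {f | ∃ θ : Fin n → NNParam d, (∀ j, memMr r (θ j)) ∧ f = netLp Ω hΩo hΩb θ}

/-!
Pick `f ∈ X_{n,r(n)}` with `‖f - f†‖ ≤ C₀/√n`. Once `C₀/√n < γ`, Hölder continuity gives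
`‖A f - g‖ ≤ L (C₀/√n)^θ`, and this is at most `(τ - 1) δ` as soon as
`n ≥ C₀² (L / ((τ - 1) δ))^(2/θ) = C₀² (L / (τ - 1))^(2/θ) δ^(-2/θ)`; the triangle inequality with
`‖g^δ - g‖ ≤ δ` then bounds the residual of `f` by `τ δ`. Since `δ^(-2/θ) ≥ 1` for `δ ≤ 1`, the
constant `C = C₀² (L / (τ - 1))^(2/θ) + (C₀/γ)² + 1` enforces both conditions on `n`.
-/

theorem norm_apply_sub_le_of_holder {X Y : Type*} [NormedAddCommGroup X] [NormedAddCommGroup Y]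
    {A : X → Y} {x₀ x : X} {y : Y} {θ L γ t δ τ : ℝ} (hθ : 0 ≤ θ)
    (hHolder : ∀ x : X, ‖x - x₀‖ < γ → ‖A x - A x₀‖ ≤ L * ‖x - x₀‖ ^ θ)
    (hL : 0 ≤ L) (hx : ‖x - x₀‖ ≤ t) (htγ : t < γ) (hrate : L * t ^ θ ≤ (τ - 1) * δ)
    (hy : ‖y - A x₀‖ ≤ δ) : ‖A x - y‖ ≤ τ * δ := by
  have hAx : ‖A x - A x₀‖ ≤ (τ - 1) * δ :=
    calc ‖A x - A x₀‖ ≤ L * ‖x - x₀‖ ^ θ := hHolder x (hx.trans_lt htγ)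
      _ ≤ L * t ^ θ := by gcongr
      _ ≤ (τ - 1) * δ := hrate
  calc ‖A x - y‖ ≤ ‖A x - A x₀‖ + ‖y - A x₀‖ := by
        simpa only [norm_sub_rev (A x₀) y] using norm_sub_le_norm_sub_add_norm_sub (A x) (A x₀) y
    _ ≤ τ * δ := by linarith

theorem div_sqrt_lt_of_div_sq_lt {C₀ γ x : ℝ} (hγ : 0 < γ) (h : (C₀ / γ) ^ 2 < x) :
    C₀ / √x < γ := by
  have hx : 0 < √x := Real.sqrt_pos.mpr ((sq_nonneg _).trans_lt h)
  have : C₀ / γ < √x := Real.lt_sqrt_of_sq_lt h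
  rwa [div_lt_iff₀ hγ, ← div_lt_iff₀' hx] at this

theorem mul_div_sqrt_rpow_le {C₀ L ε θ x : ℝ} (hθ : 0 < θ) (hL : 0 < L) (hε : 0 < ε)
    (hC₀ : 0 ≤ C₀) (hx : 0 < x) (h : C₀ ^ 2 * (L / ε) ^ (2 / θ) ≤ x) :
    L * (C₀ / √x) ^ θ ≤ ε := by
  have hεL : 0 < (ε / L) ^ (2 / θ) := by positivity
  have hsq : ((C₀ / √x) ^ θ) ^ (2 / θ) = C₀ ^ 2 / x := by
    rw [← Real.rpow_mul (by positivity), mul_div_cancel₀ _ hθ.ne', Real.rpow_two, div_pow,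
      Real.sq_sqrt hx.le]
  have : C₀ ^ 2 / x ≤ (ε / L) ^ (2 / θ) := by
    rw [← inv_div, Real.inv_rpow (by positivity), ← div_eq_mul_inv, div_le_iff₀ hεL] at h
    rwa [div_le_iff₀ hx, mul_comm]
  rw [← hsq, Real.rpow_le_rpow_iff (by positivity) (by positivity) (by positivity)] at this
  rwa [le_div_iff₀' hL] at this

theorem discrepancy_principle_stopping_width_bound_general
    {d : ℕ} (Ω : Set (Fin d → ℝ)) (hΩo : IsOpen Ω)
    (hΩb : IsBounded Ω)
    {Y : Type*} [NormedAddCommGroup Y]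
    (A : Lp ℝ 2 (volume.restrict Ω) → Y)
    (fdag : Lp ℝ 2 (volume.restrict Ω))
    (θh : ℝ) (hθ0 : 0 < θh)
    (L γ : ℝ) (hL : 0 < L) (hγ : 0 < γ)
    (hHolder : ∀ f : Lp ℝ 2 (volume.restrict Ω),
      ‖f - fdag‖ < γ → ‖A f - A fdag‖ ≤ L * ‖f - fdag‖ ^ θh)
    (r : ℕ → ℝ)
    (C₀ : ℝ) (hC₀ : 0 < C₀)
    (happrox : ∀ n : ℕ, 1 ≤ n →
      ∃ f ∈ Xlp Ω hΩo hΩb n (r n), ‖f - fdag‖ ≤ C₀ / Real.sqrt n)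
    (τ : ℝ) (hτ : 1 < τ) :
    ∃ C : ℝ, 0 < C ∧
      ∀ δ : ℝ, 0 < δ → δ ≤ 1 → ∀ gδ : Y, ‖gδ - A fdag‖ ≤ δ →
        ∀ n : ℕ, C * δ ^ (-(2 / θh)) ≤ (n : ℝ) →
          sInf {y : ℝ | ∃ f ∈ Xlp Ω hΩo hΩb n (r n), y = ‖A f - gδ‖} ≤ τ * δ := by
  have hτ1 : 0 < τ - 1 := sub_pos.mpr hτ
  set M := L / (τ - 1)
  refine ⟨C₀ ^ 2 * M ^ (2 / θh) + (C₀ / γ) ^ 2 + 1, by positivity, ?_⟩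
  intro δ hδ hδ1 gδ hgδ n hn
  have hδpow : 1 ≤ δ ^ (-(2 / θh)) :=
    Real.one_le_rpow_of_pos_of_le_one_of_nonpos hδ hδ1 (neg_nonpos.mpr (by positivity))
  have hM : (L / ((τ - 1) * δ)) ^ (2 / θh) = M ^ (2 / θh) * δ ^ (-(2 / θh)) := by
    rw [← div_div, Real.div_rpow (by positivity) hδ.le, Real.rpow_neg hδ.le, div_eq_mul_inv]
  have hn_split : C₀ ^ 2 * M ^ (2 / θh) * δ ^ (-(2 / θh)) + ((C₀ / γ) ^ 2 + 1) ≤ n :=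
    calc _ ≤ (C₀ ^ 2 * M ^ (2 / θh) + (C₀ / γ) ^ 2 + 1) * δ ^ (-(2 / θh)) := by
          linarith [mul_nonneg (by positivity : 0 ≤ (C₀ / γ) ^ 2 + 1) (sub_nonneg.mpr hδpow)]
      _ ≤ n := hn
  have hn_rate : C₀ ^ 2 * (L / ((τ - 1) * δ)) ^ (2 / θh) ≤ n := by
    rw [hM]; linarith [sq_nonneg (C₀ / γ)]
  have hn_radius : (C₀ / γ) ^ 2 + 1 ≤ n := by
    linarith [(by positivity : 0 ≤ C₀ ^ 2 * M ^ (2 / θh) * δ ^ (-(2 / θh)))]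
  have hn1 : (1 : ℝ) ≤ n := by linarith [sq_nonneg (C₀ / γ)]
  have hn0 : (0 : ℝ) < n := one_pos.trans_le hn1
  obtain ⟨f, hfX, hf⟩ := happrox n (by exact_mod_cast hn1)
  refine le_trans (csInf_le ⟨0, ?_⟩ ⟨f, hfX, rfl⟩) ?_
  · rintro _ ⟨_, -, rfl⟩
    exact norm_nonneg _
  · exact norm_apply_sub_le_of_holder hθ0.le hHolder hL.le hf
      (div_sqrt_lt_of_div_sq_lt hγ (by linarith))
      (mul_div_sqrt_rpow_le hθ0 hL (by positivity) hC₀.le hn0 hn_rate) hgδ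

/-- Quantitative termination of the discrepancy principle: if `A` is
locally Hölder continuous of order `θ ∈ (0,1]` at `f†` and the network classes
`X_{n,r(n)}` approximate `f†` at rate `C₀/√n`, then there is a constant `C > 0` such that
for every noise level `δ ∈ (0,1]`, every `g^δ` with `‖g^δ − g‖ ≤ δ`, and every width
`n ≥ C·δ^{−2/θ}`, the minimal residual over `X_{n,r(n)}` is `≤ τδ`.  In particular the
discrepancy-principle stopping width is `O(δ^{−2/θ})`. -/
theorem discrepancy_principle_stopping_width_bound
    {d : ℕ} (hd : 1 ≤ d) (Ω : Set (Fin d → ℝ)) (hne : Ω.Nonempty) (hΩo : IsOpen Ω)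
    (hΩb : IsBounded Ω)
    {Y : Type*} [NormedAddCommGroup Y] [NormedSpace ℝ Y]
    (A : Lp ℝ 2 (volume.restrict Ω) → Y)
    (fdag : Lp ℝ 2 (volume.restrict Ω))
    (θh : ℝ) (hθ0 : 0 < θh) (hθ1 : θh ≤ 1)
    (L γ : ℝ) (hL : 0 < L) (hγ : 0 < γ)
    (hHolder : ∀ f : Lp ℝ 2 (volume.restrict Ω),
      ‖f - fdag‖ < γ → ‖A f - A fdag‖ ≤ L * ‖f - fdag‖ ^ θh)
    (r : ℕ → ℝ) (hr : ∀ n, 0 < r n)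
    (C₀ : ℝ) (hC₀ : 0 < C₀)
    (happrox : ∀ n : ℕ, 1 ≤ n →
      ∃ f ∈ Xlp Ω hΩo hΩb n (r n), ‖f - fdag‖ ≤ C₀ / Real.sqrt n)
    (τ : ℝ) (hτ : 1 < τ) :
    ∃ C : ℝ, 0 < C ∧
      ∀ δ : ℝ, 0 < δ → δ ≤ 1 → ∀ gδ : Y, ‖gδ - A fdag‖ ≤ δ →
        ∀ n : ℕ, C * δ ^ (-(2 / θh)) ≤ (n : ℝ) →
          sInf {y : ℝ | ∃ f ∈ Xlp Ω hΩo hΩb n (r n), y = ‖A f - gδ‖} ≤ τ * δ :=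
  discrepancy_principle_stopping_width_bound_general Ω hΩo hΩb A fdag θh hθ0 L γ hL hγ hHolder r C₀
    hC₀ happrox τ hτ

end
end
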